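/- arXiv:1905.13002 — 6 statements merged into one kernel-verified Lean document; each statement's English description precedes it below -/
import Mathlib

section
/- The binary operator ⊗ for Bayesian filtering is associative: for three pairs (f_i,g_i), (f_j,g_j), (f_k,g_k), where each f is a conditional density and each g a nonnegative function, we have [(f_i,g_i) ⊗ (f_j,g_j)] ⊗ (f_k,g_k) = (f_i,g_i) ⊗ [(f_j,g_j) ⊗ (f_k,g_k)], provided all appearing integrals are finite and nonzero. -/
open MeasureTheory
open scoped ENNReal

/-- `f`-component of the Bayesian filtering operator:
`f_{ij}(x∣z) = (∫ gⱼ(y) fⱼ(x∣y) fᵢ(y∣z) dy) / (∫ gⱼ(y) fᵢ(y∣z) dy)`. -/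
noncomputable def fOp {d : ℕ}
    (fi fj : (Fin d → ℝ) → (Fin d → ℝ) → ℝ≥0∞)
    (gj : (Fin d → ℝ) → ℝ≥0∞) :
    (Fin d → ℝ) → (Fin d → ℝ) → ℝ≥0∞ :=
  fun x z => (∫⁻ y, gj y * fj x y * fi y z) / (∫⁻ y, gj y * fi y z)

/-- `g`-component of the Bayesian filtering operator:
`g_{ij}(z) = gᵢ(z) ∫ gⱼ(y) fᵢ(y∣z) dy`. -/
noncomputable def gOp {d : ℕ}
    (fi : (Fin d → ℝ) → (Fin d → ℝ) → ℝ≥0∞)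
    (gi gj : (Fin d → ℝ) → ℝ≥0∞) :
    (Fin d → ℝ) → ℝ≥0∞ :=
  fun z => gi z * ∫⁻ y, gj y * fi y z

/-! Both sides reduce to iterated integrals `∫ gⱼ(y') (∫ c(y) fⱼ(y∣y') dy) fᵢ(y'∣z) dy'` with
`c = gₖ fₖ(x∣·)` or `c = gₖ`: on the left by Tonelli, after integrating `c` against `f_{ij}(·∣z)`;
on the right because the normalizer of `f_{jk}` cancels against the factor it puts into `g_{jk}`.
The left side carries the extra factor `(∫ gⱼ fᵢ(·∣z))⁻¹`, which cancels in the quotient defining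
the `f`-component and against the factor in `g_{ij}` for the `g`-component. -/

theorem lintegral_mul_lintegral_mul_swap {α β : Type*} [MeasurableSpace α] [MeasurableSpace β]
    {μ : Measure α} {ν : Measure β} [SFinite μ] [SFinite ν]
    {c : α → ℝ≥0∞} {g h : β → ℝ≥0∞} {K : α → β → ℝ≥0∞}
    (hc : Measurable c) (hg : Measurable g) (hh : Measurable h)
    (hK : Measurable (Function.uncurry K)) :
    ∫⁻ x, c x * ∫⁻ y, g y * K x y * h y ∂ν ∂μ = ∫⁻ y, g y * (∫⁻ x, c x * K x y ∂μ) * h y ∂ν := by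
  calc ∫⁻ x, c x * ∫⁻ y, g y * K x y * h y ∂ν ∂μ
      = ∫⁻ x, ∫⁻ y, c x * (g y * K x y * h y) ∂ν ∂μ :=
        lintegral_congr fun x => (lintegral_const_mul _ (by fun_prop)).symm
    _ = ∫⁻ y, ∫⁻ x, c x * (g y * K x y * h y) ∂μ ∂ν :=
        lintegral_lintegral_swap (by fun_prop)
    _ = ∫⁻ y, g y * (∫⁻ x, c x * K x y ∂μ) * h y ∂ν := by
        refine lintegral_congr fun y => ?_
        rw [← lintegral_const_mul _ (by fun_prop), ← lintegral_mul_const _ (by fun_prop)]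
        exact lintegral_congr fun x => by ring

section FilteringOperator

variable {d : ℕ} {fi fj fk : (Fin d → ℝ) → (Fin d → ℝ) → ℝ≥0∞} {gj gk : (Fin d → ℝ) → ℝ≥0∞}

theorem lintegral_mul_fOp (hfi : Measurable (Function.uncurry fi))
    (hfj : Measurable (Function.uncurry fj)) (hgj : Measurable gj)
    {c : (Fin d → ℝ) → ℝ≥0∞} (hc : Measurable c) (z : Fin d → ℝ) :
    ∫⁻ y, c y * fOp fi fj gj y z
      = (∫⁻ y', gj y' * (∫⁻ y, c y * fj y y') * fi y' z) / ∫⁻ y', gj y' * fi y' z := by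
  simp only [fOp, div_eq_mul_inv, ← mul_assoc]
  rw [lintegral_mul_const _ (by fun_prop), lintegral_mul_lintegral_mul_swap hc hgj (by fun_prop) hfj]

theorem gOp_mul_fOp {y : Fin d → ℝ} (h0 : ∫⁻ w, gk w * fj w y ≠ 0)
    (hT : ∫⁻ w, gk w * fj w y ≠ ⊤) (x : Fin d → ℝ) :
    gOp fj gj gk y * fOp fj fk gk x y = gj y * ∫⁻ w, gk w * fk x w * fj w y := by
  rw [gOp, fOp, mul_assoc, ENNReal.mul_div_cancel h0 hT]

end FilteringOperator

theorem filtering_operator_assoc_general {d : ℕ}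
    (fi fj fk : (Fin d → ℝ) → (Fin d → ℝ) → ℝ≥0∞)
    (gi gj gk : (Fin d → ℝ) → ℝ≥0∞)
    (hfi : Measurable (Function.uncurry fi))
    (hfj : Measurable (Function.uncurry fj))
    (hfk : Measurable (Function.uncurry fk))
    (hgj : Measurable gj) (hgk : Measurable gk)
    (hij0 : ∀ z, (∫⁻ y, gj y * fi y z) ≠ 0)
    (hijT : ∀ z, (∫⁻ y, gj y * fi y z) ≠ ⊤)
    (hjk0 : ∀ z, (∫⁻ y, gk y * fj y z) ≠ 0)
    (hjkT : ∀ z, (∫⁻ y, gk y * fj y z) ≠ ⊤) :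
    fOp (fOp fi fj gj) fk gk = fOp fi (fOp fj fk gk) (gOp fj gj gk)
      ∧ gOp (fOp fi fj gj) (gOp fi gi gj) gk = gOp fi gi (gOp fj gj gk) := by
  have hgk_mul : ∀ z, ∫⁻ y, gk y * fOp fi fj gj y z = (∫⁻ y', gOp fj gj gk y' * fi y' z)
      / ∫⁻ y', gj y' * fi y' z := fun z => lintegral_mul_fOp hfi hfj hgj hgk z
  constructor
  · funext x z
    show (∫⁻ y, gk y * fk x y * fOp fi fj gj y z) / (∫⁻ y, gk y * fOp fi fj gj y z)
      = (∫⁻ y', gOp fj gj gk y' * fOp fj fk gk x y' * fi y' z) / ∫⁻ y', gOp fj gj gk y' * fi y' z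
    simp only [gOp_mul_fOp (hjk0 _) (hjkT _)]
    rw [lintegral_mul_fOp hfi hfj hgj (by fun_prop), hgk_mul, div_eq_mul_inv _ (∫⁻ y', _),
      div_eq_mul_inv _ (∫⁻ y', _),
      ENNReal.mul_div_mul_right _ _ (by simp [hijT z]) (by simp [hij0 z])]
  · funext z
    rw [gOp, hgk_mul, gOp, mul_assoc, ENNReal.mul_div_cancel (hij0 z) (hijT z)]
    rfl

/-- **Associativity of the Bayesian filtering operator** `⊗` on pairs `(f,g)`,
where each `f` is a conditional density (`∫ f(y∣z) dy = 1`) and each `g` is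
nonnegative measurable (formalized `ℝ≥0∞`-valued), assuming the appearing
normalizing integrals are positive and finite:
`[(fᵢ,gᵢ) ⊗ (fⱼ,gⱼ)] ⊗ (fₖ,gₖ) = (fᵢ,gᵢ) ⊗ [(fⱼ,gⱼ) ⊗ (fₖ,gₖ)]`. -/
theorem filtering_operator_assoc {d : ℕ}
    (fi fj fk : (Fin d → ℝ) → (Fin d → ℝ) → ℝ≥0∞)
    (gi gj gk : (Fin d → ℝ) → ℝ≥0∞)
    (hfi : Measurable (Function.uncurry fi))
    (hfj : Measurable (Function.uncurry fj))
    (hfk : Measurable (Function.uncurry fk))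
    (hgi : Measurable gi) (hgj : Measurable gj) (hgk : Measurable gk)
    (hni : ∀ z, ∫⁻ y, fi y z = 1)
    (hnj : ∀ z, ∫⁻ y, fj y z = 1)
    (hnk : ∀ z, ∫⁻ y, fk y z = 1)
    (hij0 : ∀ z, (∫⁻ y, gj y * fi y z) ≠ 0)
    (hijT : ∀ z, (∫⁻ y, gj y * fi y z) ≠ ⊤)
    (hjk0 : ∀ z, (∫⁻ y, gk y * fj y z) ≠ 0)
    (hjkT : ∀ z, (∫⁻ y, gk y * fj y z) ≠ ⊤)
    (hD0 : ∀ z, (∫⁻ y, ∫⁻ y', gk y * gj y' * fj y y' * fi y' z) ≠ 0)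
    (hDT : ∀ z, (∫⁻ y, ∫⁻ y', gk y * gj y' * fj y y' * fi y' z) ≠ ⊤) :
    fOp (fOp fi fj gj) fk gk = fOp fi (fOp fj fk gk) (gOp fj gj gk)
      ∧ gOp (fOp fi fj gj) (gOp fi gi gj) gk = gOp fi gi (gOp fj gj gk) :=
  filtering_operator_assoc_general fi fj fk gi gj gk hfi hfj hfk hgj hgk hij0 hijT hjk0 hjkT
end

section
/- For the filtering operator ⊗, the combined likelihood factor satisfies g_{ijk}(z) = g_i(z) ∬ g_k(y) g_j(y') f_j(y|y') f_i(y'|z) dy' dy, and this equals the result obtained by either order of association. -/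
/-!
Associating to the left, the normalising constant `∫ gⱼ(y') fᵢ(y'|z) dy'` in the denominator of
`fOp fi fj gj` cancels against the same factor of `gOp fi gi gj`. Associating to the right, the
factors `gⱼ(y') fᵢ(y'|z)` move into the inner integral and Tonelli swaps the two integrations.
-/

open MeasureTheory
open scoped ENNReal

section Lintegral

variable {α β : Type*} [MeasurableSpace α] [MeasurableSpace β]

theorem mul_lintegral_div_const {μ : Measure α} (f : α → ℝ≥0∞) {c : ℝ≥0∞} (hc0 : c ≠ 0)
    (hcT : c ≠ ∞) : c * ∫⁻ x, f x / c ∂μ = ∫⁻ x, f x ∂μ := by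
  simp_rw [div_eq_mul_inv]
  rw [lintegral_mul_const' _ _ (ENNReal.inv_ne_top.2 hc0), mul_left_comm,
    ENNReal.mul_inv_cancel hc0 hcT, mul_one]

theorem lintegral_mul_lintegral_swap {μ : Measure α} {ν : Measure β} [SFinite μ] [SFinite ν]
    {a : α → ℝ≥0∞} {b : β → α → ℝ≥0∞} (ha : Measurable a)
    (hb : Measurable (Function.uncurry b)) :
    ∫⁻ x, a x * ∫⁻ y, b y x ∂ν ∂μ = ∫⁻ y, ∫⁻ x, a x * b y x ∂μ ∂ν := by
  simp_rw [← lintegral_const_mul _ hb.of_uncurry_right]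
  exact lintegral_lintegral_swap
    ((ha.comp measurable_fst).mul (hb.comp measurable_swap)).aemeasurable

end Lintegral

section FilteringOperator

variable {d : ℕ} (fi fj : (Fin d → ℝ) → (Fin d → ℝ) → ℝ≥0∞) (gi gj gk : (Fin d → ℝ) → ℝ≥0∞)
  (z : Fin d → ℝ)

theorem gOp_fOp_gOp_eq_lintegral_lintegral (hfi : Measurable (Function.uncurry fi))
    (hfj : Measurable (Function.uncurry fj)) (hgj : Measurable gj)
    (h0 : ∫⁻ y, gj y * fi y z ≠ 0) (hT : ∫⁻ y, gj y * fi y z ≠ ⊤) :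
    gOp (fOp fi fj gj) (gOp fi gi gj) gk z
      = gi z * ∫⁻ y, ∫⁻ y', gk y * gj y' * fj y y' * fi y' z := by
  simp only [gOp, fOp, ← mul_div_assoc]
  rw [mul_assoc, mul_lintegral_div_const _ h0 hT]
  congr 1
  refine lintegral_congr fun y => ?_
  have hm : Measurable fun y' => gj y' * fj y y' * fi y' z :=
    (hgj.mul hfj.of_uncurry_left).mul hfi.of_uncurry_right
  rw [← lintegral_const_mul _ hm]
  simp_rw [mul_assoc]

theorem gOp_gOp_eq_lintegral_lintegral (hfi : Measurable (Function.uncurry fi))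
    (hfj : Measurable (Function.uncurry fj)) (hgj : Measurable gj) (hgk : Measurable gk) :
    gOp fi gi (gOp fj gj gk) z = gi z * ∫⁻ y, ∫⁻ y', gk y * gj y' * fj y y' * fi y' z := by
  have hb : Measurable (Function.uncurry fun y y' => gk y * fj y y') :=
    (hgk.comp measurable_fst).mul hfj
  simp only [gOp]
  congr 1
  calc ∫⁻ y', (gj y' * ∫⁻ y, gk y * fj y y') * fi y' z
      = ∫⁻ y', gj y' * fi y' z * ∫⁻ y, gk y * fj y y' :=
        lintegral_congr fun _ => mul_right_comm _ _ _
    _ = ∫⁻ y, ∫⁻ y', gj y' * fi y' z * (gk y * fj y y') :=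
        lintegral_mul_lintegral_swap (hgj.mul hfi.of_uncurry_right) hb
    _ = ∫⁻ y, ∫⁻ y', gk y * gj y' * fj y y' * fi y' z :=
        lintegral_congr fun _ => lintegral_congr fun _ => by ring

end FilteringOperator

theorem filtering_g_double_integral_general {d : ℕ}
    (fi fj : (Fin d → ℝ) → (Fin d → ℝ) → ℝ≥0∞)
    (gi gj gk : (Fin d → ℝ) → ℝ≥0∞)
    (hfi : Measurable (Function.uncurry fi))
    (hfj : Measurable (Function.uncurry fj))
    (hgj : Measurable gj) (hgk : Measurable gk)
    (hij0 : ∀ z, (∫⁻ y, gj y * fi y z) ≠ 0)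
    (hijT : ∀ z, (∫⁻ y, gj y * fi y z) ≠ ⊤) :
    (∀ z, gOp (fOp fi fj gj) (gOp fi gi gj) gk z
        = gi z * ∫⁻ y, ∫⁻ y', gk y * gj y' * fj y y' * fi y' z)
    ∧ (∀ z, gOp fi gi (gOp fj gj gk) z
        = gi z * ∫⁻ y, ∫⁻ y', gk y * gj y' * fj y y' * fi y' z) :=
  ⟨fun z => gOp_fOp_gOp_eq_lintegral_lintegral fi fj gi gj gk z hfi hfj hgj (hij0 z) (hijT z),
    fun z => gOp_gOp_eq_lintegral_lintegral fi fj gi gj gk z hfi hfj hgj hgk⟩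

/-- **Combined likelihood factor of the filtering operator:**
`g_{ijk}(z) = gᵢ(z) ∬ gₖ(y) gⱼ(y') fⱼ(y∣y') fᵢ(y'∣z) dy' dy`,
and this is obtained from either order of association. -/
theorem filtering_g_double_integral {d : ℕ}
    (fi fj fk : (Fin d → ℝ) → (Fin d → ℝ) → ℝ≥0∞)
    (gi gj gk : (Fin d → ℝ) → ℝ≥0∞)
    (hfi : Measurable (Function.uncurry fi))
    (hfj : Measurable (Function.uncurry fj))
    (hfk : Measurable (Function.uncurry fk))
    (hgi : Measurable gi) (hgj : Measurable gj) (hgk : Measurable gk)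
    (hni : ∀ z, ∫⁻ y, fi y z = 1)
    (hnj : ∀ z, ∫⁻ y, fj y z = 1)
    (hnk : ∀ z, ∫⁻ y, fk y z = 1)
    (hij0 : ∀ z, (∫⁻ y, gj y * fi y z) ≠ 0)
    (hijT : ∀ z, (∫⁻ y, gj y * fi y z) ≠ ⊤) :
    (∀ z, gOp (fOp fi fj gj) (gOp fi gi gj) gk z
        = gi z * ∫⁻ y, ∫⁻ y', gk y * gj y' * fj y y' * fi y' z)
    ∧ (∀ z, gOp fi gi (gOp fj gj gk) z
        = gi z * ∫⁻ y, ∫⁻ y', gk y * gj y' * fj y y' * fi y' z) :=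
  filtering_g_double_integral_general fi fj gi gj gk hfi hfj hgj hgk hij0 hijT
end

section
/- In a hidden Markov model, if a_k = p(x_k | y_{1:k}, x_{k+1}) for k < n and a_n = p(x_n | y_{1:n}), then the iterated smoothing composition satisfies a_k ⊗ a_{k+1} ⊗ ⋯ ⊗ a_n = p(x_k | y_{1:n}), where ⊗ is kernel composition (a_i ⊗ a_j)(x|z) = ∫ a_i(x|y) a_j(y|z) dy. -/
open Finset

/-- Unnormalized forward quantity of a discrete hidden Markov model with fixed
observations: `hmmAlpha init trans like k x = p(x_k = x, y_{1:k})`, where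
`trans k z x = p(x_k = x ∣ x_{k-1} = z)` and `like k x = p(y_k ∣ x_k = x)`. -/
def hmmAlpha {S : Type*} [Fintype S] (init : S → ℝ)
    (trans : ℕ → S → S → ℝ) (like : ℕ → S → ℝ) : ℕ → S → ℝ
  | 0, x => init x
  | k + 1, x => (∑ w, hmmAlpha init trans like k w * trans (k + 1) w x) * like (k + 1) x

/-- Backward quantity `hmmGamma trans like k l u v = p(y_{k+1:k+l}, x_{k+l+1} = v ∣ x_k = u)`. -/
def hmmGamma {S : Type*} [Fintype S]
    (trans : ℕ → S → S → ℝ) (like : ℕ → S → ℝ) : ℕ → ℕ → S → S → ℝ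
  | k, 0, u, v => trans (k + 1) u v
  | k, l + 1, u, v =>
      ∑ w, trans (k + 1) u w * like (k + 1) w * hmmGamma trans like (k + 1) l w v

/-- Backward likelihood `hmmBeta trans like k l u = p(y_{k+1:k+l} ∣ x_k = u)`. -/
def hmmBeta {S : Type*} [Fintype S]
    (trans : ℕ → S → S → ℝ) (like : ℕ → S → ℝ) : ℕ → ℕ → S → ℝ
  | _, 0, _ => 1
  | k, l + 1, u =>
      ∑ w, trans (k + 1) u w * like (k + 1) w * hmmBeta trans like (k + 1) l w

/-- Conditional density `p(x_k = u ∣ y_{1:m}, x_{m+1} = v)` (for `k ≤ m`). -/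
noncomputable def hmmCond {S : Type*} [Fintype S] (init : S → ℝ)
    (trans : ℕ → S → S → ℝ) (like : ℕ → S → ℝ) (k m : ℕ) (u v : S) : ℝ :=
  hmmAlpha init trans like k u * hmmGamma trans like k (m - k) u v /
    ∑ u', hmmAlpha init trans like k u' * hmmGamma trans like k (m - k) u' v

/-- Smoothing density `hmmSmooth init trans like n k u = p(x_k = u ∣ y_{1:n})`. -/
noncomputable def hmmSmooth {S : Type*} [Fintype S] (init : S → ℝ)
    (trans : ℕ → S → S → ℝ) (like : ℕ → S → ℝ) (n k : ℕ) (u : S) : ℝ :=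
  hmmAlpha init trans like k u * hmmBeta trans like k (n - k) u /
    ∑ u', hmmAlpha init trans like k u' * hmmBeta trans like k (n - k) u'

/-- The iterated smoothing composition `a_{n-l} ⊗ a_{n-l+1} ⊗ ⋯ ⊗ a_n`, where
`a_k(x∣z) = p(x_k = x ∣ y_{1:k}, x_{k+1} = z)` for `k < n`,
`a_n(x∣z) = p(x_n = x ∣ y_{1:n})`, and
`(a ⊗ b)(x∣z) = ∑_y a(x∣y) b(y∣z)` is kernel composition. -/
noncomputable def hmmSmoothFold {S : Type*} [Fintype S] (init : S → ℝ)
    (trans : ℕ → S → S → ℝ) (like : ℕ → S → ℝ) (n : ℕ) : ℕ → S → S → ℝ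
  | 0, x, _ => hmmSmooth init trans like n n x
  | l + 1, x, z =>
      ∑ y, hmmCond init trans like (n - (l + 1)) (n - (l + 1)) x y *
        hmmSmoothFold init trans like n l y z

/-!
Induct on the number of factors, from the end. Each step is the backward smoothing recursion
`p(x_k ∣ y_{1:n}) = ∑_y p(x_k ∣ y_{1:k}, x_{k+1} = y) p(x_{k+1} = y ∣ y_{1:n})`: the
denominator of `hmmCond k k · y` is exactly the prediction sum inside `α_{k+1}(y)`, so it
cancels, and what remains is `α_k(x) β_k(x)` summed against the normaliser of time `k + 1`,
which equals the normaliser of time `k`.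
-/

section

variable {S : Type*} [Fintype S] (init : S → ℝ) (trans : ℕ → S → S → ℝ) (like : ℕ → S → ℝ)

theorem hmmAlpha_nonneg (hinit : ∀ x, 0 ≤ init x) (htrans : ∀ k z x, 0 ≤ trans k z x)
    (hlike : ∀ k x, 0 ≤ like k x) (k : ℕ) (x : S) : 0 ≤ hmmAlpha init trans like k x := by
  induction k generalizing x with
  | zero => exact hinit x
  | succ k ih =>
    exact mul_nonneg (sum_nonneg fun w _ => mul_nonneg (ih w) (htrans _ _ _)) (hlike _ _)

/-- Both sides are the normaliser `p(y_{1:k+l+1})`, expanded at time `k + 1` and at time `k`. -/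
theorem sum_hmmAlpha_succ_mul_hmmBeta (k l : ℕ) :
    ∑ y, hmmAlpha init trans like (k + 1) y * hmmBeta trans like (k + 1) l y
      = ∑ u, hmmAlpha init trans like k u * hmmBeta trans like k (l + 1) u := by
  simp only [hmmAlpha, hmmBeta, sum_mul, mul_sum]
  rw [sum_comm]
  exact sum_congr rfl fun _ _ => sum_congr rfl fun _ _ => by ring

/-- When the predicted mass `∑ w, α_k(w) trans(w, y)` vanishes (so `hmmCond` divides by zero),
nonnegativity forces `α_k(x) trans(x, y) = 0` as well. -/
theorem hmmCond_self_mul_sum {k : ℕ} {y : S}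
    (hA : ∀ u, 0 ≤ hmmAlpha init trans like k u) (hT : ∀ u, 0 ≤ trans (k + 1) u y) (x : S) :
    hmmCond init trans like k k x y * ∑ w, hmmAlpha init trans like k w * trans (k + 1) w y
      = hmmAlpha init trans like k x * trans (k + 1) x y := by
  simp only [hmmCond, Nat.sub_self, hmmGamma]
  rcases eq_or_ne (∑ w, hmmAlpha init trans like k w * trans (k + 1) w y) 0 with h | h
  · have hx := (sum_eq_zero_iff_of_nonneg fun w _ => mul_nonneg (hA w) (hT w)).1 h x (mem_univ x)
    simp [h, hx]
  · exact div_mul_cancel₀ _ h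

theorem sum_hmmCond_mul_hmmSmooth_succ (hinit : ∀ x, 0 ≤ init x)
    (htrans : ∀ k z x, 0 ≤ trans k z x) (hlike : ∀ k x, 0 ≤ like k x)
    {n k : ℕ} (hk : k < n) (x : S) :
    ∑ y, hmmCond init trans like k k x y * hmmSmooth init trans like n (k + 1) y
      = hmmSmooth init trans like n k x := by
  obtain ⟨m, rfl⟩ : ∃ m, n = k + 1 + m := ⟨n - (k + 1), by omega⟩
  have hA := hmmAlpha_nonneg init trans like hinit htrans hlike k
  have hterm : ∀ y,
      hmmCond init trans like k k x y * hmmSmooth init trans like (k + 1 + m) (k + 1) y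
      = hmmAlpha init trans like k x * (trans (k + 1) x y * like (k + 1) y
          * hmmBeta trans like (k + 1) m y)
        / ∑ u, hmmAlpha init trans like k u * hmmBeta trans like k (m + 1) u := by
    intro y
    rw [hmmSmooth, Nat.add_sub_cancel_left, sum_hmmAlpha_succ_mul_hmmBeta, mul_div_assoc',
      hmmAlpha, ← mul_assoc, ← mul_assoc, hmmCond_self_mul_sum init trans like hA (htrans _ · y)]
    ring
  rw [sum_congr rfl fun y _ => hterm y, ← sum_div, ← mul_sum, hmmSmooth,
    show k + 1 + m - k = m + 1 by omega]
  rfl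

end

theorem smoothing_prefix_composition_general {S : Type*} [Fintype S]
    (init : S → ℝ) (trans : ℕ → S → S → ℝ) (like : ℕ → S → ℝ)
    (hinit : ∀ x, 0 < init x)
    (htrans : ∀ n z x, 0 < trans n z x)
    (hlike : ∀ n x, 0 < like n x)
    (n l : ℕ) (hl : l ≤ n) :
    ∀ x z, hmmSmoothFold init trans like n l x z
      = hmmSmooth init trans like n (n - l) x := by
  induction l with
  | zero => intro x z; rfl
  | succ l ih =>
    intro x z
    have hsucc : n - l = n - (l + 1) + 1 := by omega
    calc hmmSmoothFold init trans like n (l + 1) x z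
        = ∑ y, hmmCond init trans like (n - (l + 1)) (n - (l + 1)) x y
            * hmmSmooth init trans like n (n - (l + 1) + 1) y := by
          simp only [hmmSmoothFold, ih (by omega), hsucc]
      _ = hmmSmooth init trans like n (n - (l + 1)) x :=
          sum_hmmCond_mul_hmmSmooth_succ init trans like (fun x => (hinit x).le)
            (fun k z x => (htrans k z x).le) (fun k x => (hlike k x).le) (by omega) x

/-- **Parallel smoothing theorem** (discrete hidden Markov model): with
`a_k = p(x_k ∣ y_{1:k}, x_{k+1})` for `k < n` and `a_n = p(x_n ∣ y_{1:n})`,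
the iterated kernel composition satisfies
`a_k ⊗ a_{k+1} ⊗ ⋯ ⊗ a_n = p(x_k ∣ y_{1:n})` (here `k = n - l`). -/
theorem smoothing_prefix_composition {S : Type*} [Fintype S] [Nonempty S]
    (init : S → ℝ) (trans : ℕ → S → S → ℝ) (like : ℕ → S → ℝ)
    (hinit : ∀ x, 0 < init x)
    (htrans : ∀ n z x, 0 < trans n z x)
    (hlike : ∀ n x, 0 < like n x)
    (hinit1 : ∑ x, init x = 1)
    (htrans1 : ∀ n z, ∑ x, trans n z x = 1)
    (n l : ℕ) (hl : l ≤ n) :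
    ∀ x z, hmmSmoothFold init trans like n l x z
      = hmmSmooth init trans like n (n - l) x :=
  smoothing_prefix_composition_general init trans like hinit htrans hlike n l hl
end

section
/- In a hidden Markov model, if each filtering element is a_k = (p(x_k | y_k, x_{k-1}), p(y_k | x_{k-1})) with the convention p(x_1 | y_1, x_0) = p(x_1 | y_1) and p(y_1 | x_0) = p(y_1), then the k-th prefix sum under the filtering operator ⊗ equals (p(x_k | y_{1:k}), p(y_{1:k})), i.e., a_1 ⊗ a_2 ⊗ ⋯ ⊗ a_k produces the exact Bayesian filtering density and the marginal likelihood of the observations. -/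
open Finset

/-- The Bayesian filtering operator `⊗` on pairs `(f, g)`:
`f_{ij}(x∣z) = (∑_y gⱼ(y) fⱼ(x∣y) fᵢ(y∣z)) / (∑_y gⱼ(y) fᵢ(y∣z))` and
`g_{ij}(z) = gᵢ(z) ∑_y gⱼ(y) fᵢ(y∣z)`. -/
noncomputable def filtOp {S : Type*} [Fintype S]
    (a b : (S → S → ℝ) × (S → ℝ)) : (S → S → ℝ) × (S → ℝ) :=
  (fun x z => (∑ y, b.2 y * b.1 x y * a.1 y z) / (∑ y, b.2 y * a.1 y z),
   fun z => a.2 z * ∑ y, b.2 y * a.1 y z)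

/-- The filtering element `a_k = (p(x_k ∣ y_k, x_{k-1}), p(y_k ∣ x_{k-1}))`;
`filtElem init trans like k` represents `a_{k+1}`.  The first element uses the
convention `p(x_1 ∣ y_1, x_0) = p(x_1 ∣ y_1)`, `p(y_1 ∣ x_0) = p(y_1)`. -/
noncomputable def filtElem {S : Type*} [Fintype S] (init : S → ℝ)
    (trans : ℕ → S → S → ℝ) (like : ℕ → S → ℝ) :
    ℕ → (S → S → ℝ) × (S → ℝ)
  | 0 =>
      (fun x _ => hmmAlpha init trans like 1 x / ∑ x', hmmAlpha init trans like 1 x',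
       fun _ => ∑ x', hmmAlpha init trans like 1 x')
  | n + 1 =>
      (fun x z => trans (n + 2) z x * like (n + 2) x /
          ∑ x', trans (n + 2) z x' * like (n + 2) x',
       fun z => ∑ x', trans (n + 2) z x' * like (n + 2) x')

/-- Left-fold prefix `filtPrefix k = a_1 ⊗ a_2 ⊗ ⋯ ⊗ a_{k+1}`. -/
noncomputable def filtPrefix {S : Type*} [Fintype S] (init : S → ℝ)
    (trans : ℕ → S → S → ℝ) (like : ℕ → S → ℝ) : ℕ → (S → S → ℝ) × (S → ℝ)
  | 0 => filtElem init trans like 0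
  | k + 1 => filtOp (filtPrefix init trans like k) (filtElem init trans like (k + 1))

section

variable {S : Type*} [Fintype S]

/-- The pair `(p(x_k ∣ y_{1:k}), p(y_{1:k}))` read off the unnormalized forward quantity
`α = p(x_k, y_{1:k})`; both components are constant in the conditioning variable. -/
noncomputable def posteriorPair (α : S → ℝ) : (S → S → ℝ) × (S → ℝ) :=
  (fun x _ => α x / ∑ x', α x', fun _ => ∑ x', α x')

theorem hmmAlpha_pos [Nonempty S] {init : S → ℝ} {trans : ℕ → S → S → ℝ}
    {like : ℕ → S → ℝ} (hinit : ∀ x, 0 < init x) (htrans : ∀ n z x, 0 < trans n z x)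
    (hlike : ∀ n x, 0 < like n x) (k : ℕ) (x : S) :
    0 < hmmAlpha init trans like k x := by
  induction k generalizing x with
  | zero => exact hinit x
  | succ k ih =>
    exact mul_pos (sum_pos (fun w _ => mul_pos (ih w) (htrans _ w x)) univ_nonempty)
      (hlike _ x)

theorem sum_sum_mul_mul_eq_sum_mul_sum (α l : S → ℝ) (t : S → S → ℝ) :
    ∑ x, (∑ w, α w * t w x) * l x = ∑ w, α w * ∑ x, t w x * l x := by
  simp only [sum_mul, mul_sum, mul_assoc]
  exact sum_comm

/-- With `t z x = p(x ∣ z)` and `l x = p(y ∣ x)`, the second argument is the filtering element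
`(p(x ∣ y, z), p(y ∣ z))`, and `⊗` performs one prediction-and-update step of the forward
recursion. -/
theorem filtOp_posteriorPair (α l : S → ℝ) (t : S → S → ℝ) (hα : ∑ x, α x ≠ 0)
    (hnorm : ∀ z, ∑ x, t z x * l x ≠ 0) :
    filtOp (posteriorPair α)
        (fun x z => t z x * l x / ∑ x', t z x' * l x', fun z => ∑ x', t z x' * l x')
      = posteriorPair (fun x => (∑ w, α w * t w x) * l x) := by
  set Z := ∑ x, α x
  have hnum : ∀ x, ∑ y, (∑ x', t y x' * l x') * (t y x * l x / ∑ x', t y x' * l x')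
      * (α y / Z) = (∑ w, α w * t w x) * l x / Z := by
    intro x
    rw [sum_mul, sum_div]
    refine sum_congr rfl fun y _ => ?_
    field_simp [hnorm y]
  have hden : ∑ y, (∑ x', t y x' * l x') * (α y / Z)
      = (∑ x, (∑ w, α w * t w x) * l x) / Z := by
    rw [sum_sum_mul_mul_eq_sum_mul_sum, sum_div]
    exact sum_congr rfl fun y _ => by ring
  refine Prod.ext (funext₂ fun x _ => ?_) (funext fun _ => ?_)
  · dsimp only [filtOp, posteriorPair]
    rw [hnum, hden, div_div_div_cancel_right₀ hα]
  · dsimp only [filtOp, posteriorPair]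
    rw [hden, mul_div_cancel₀ _ hα]

end

theorem filtering_prefix_composition_general {S : Type*} [Fintype S] [Nonempty S]
    (init : S → ℝ) (trans : ℕ → S → S → ℝ) (like : ℕ → S → ℝ)
    (hinit : ∀ x, 0 < init x)
    (htrans : ∀ n z x, 0 < trans n z x)
    (hlike : ∀ n x, 0 < like n x)
    (k : ℕ) :
    filtPrefix init trans like k
      = (fun x _ => hmmAlpha init trans like (k + 1) x /
            ∑ x', hmmAlpha init trans like (k + 1) x',
         fun _ => ∑ x', hmmAlpha init trans like (k + 1) x') := by
  induction k with
  | zero => rfl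
  | succ k ih =>
    rw [filtPrefix, ih]
    exact filtOp_posteriorPair _ _ _
      (sum_pos (fun x _ => hmmAlpha_pos hinit htrans hlike _ x) univ_nonempty).ne'
      fun z => (sum_pos (fun x _ => mul_pos (htrans _ z x) (hlike _ x)) univ_nonempty).ne'

/-- **Parallel filtering theorem** (discrete hidden Markov model): the prefix
`a_1 ⊗ ⋯ ⊗ a_k` under the filtering operator equals
`(p(x_k ∣ y_{1:k}), p(y_{1:k}))` (here the prefix index is `k+1`). -/
theorem filtering_prefix_composition {S : Type*} [Fintype S] [Nonempty S]
    (init : S → ℝ) (trans : ℕ → S → S → ℝ) (like : ℕ → S → ℝ)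
    (hinit : ∀ x, 0 < init x)
    (htrans : ∀ n z x, 0 < trans n z x)
    (hlike : ∀ n x, 0 < like n x)
    (hinit1 : ∑ x, init x = 1)
    (htrans1 : ∀ n z, ∑ x, trans n z x = 1)
    (k : ℕ) :
    filtPrefix init trans like k
      = (fun x _ => hmmAlpha init trans like (k + 1) x /
            ∑ x', hmmAlpha init trans like (k + 1) x',
         fun _ => ∑ x', hmmAlpha init trans like (k + 1) x') :=
  filtering_prefix_composition_general init trans like hinit htrans hlike k
end

section
/- The parametrized linear-Gaussian filtering composition on tuples (A, b, C, η, J), given by A_{ij} = A_j(I + C_i J_j)⁻¹A_i, b_{ij} = A_j(I + C_i J_j)⁻¹(b_i + C_i η_j) + b_j, C_{ij} = A_j(I + C_i J_j)⁻¹C_i A_jᵀ + C_j, η_{ij} = A_iᵀ(I + J_j C_i)⁻¹(η_j − J_j b_i) + η_i, J_{ij} = A_iᵀ(I + J_j C_i)⁻¹J_j A_i + J_i, is associative on the set of tuples where C ⪰ 0 and J ⪰ 0 (so that all matrices I + C J' appearing are invertible). -/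
/-!
Reversing the order of composition exchanges the covariance half `(b, C)` of a tuple with its
information half `(η, J)`: for `p.dual = (Aᵀ, η, J, -b, C)` one has
`(p ∘ q).dual = q.dual ∘ p.dual` as soon as the `C`s and `J`s are symmetric. So only the `A`, `b`
and `C` components of associativity need proof; the other two are the same components for
`r.dual, q.dual, p.dual`.

Using the push-through identity `(I + X Y)⁻¹ X = X (I + Y X)⁻¹`, those three components reduce
to `(I + C_{pq} J_r)⁻¹ A_q (I + C_p J_q)⁻¹ = (I + C_q J_r)⁻¹ A_q (I + C_p J_{qr})⁻¹`: clearing the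
outer inverses, both sides become `A_q + A_q (I + C_p J_q)⁻¹ C_p A_qᵀ J_r (I + C_q J_r)⁻¹ A_q`.
Positive semidefiniteness gives symmetry and makes every `I + C J` invertible: for `C = Bᴴ B`,
`det (I + Bᴴ B J) = det (I + B J Bᴴ)` and `I + B J Bᴴ` is positive definite.
-/

open Matrix

/-- Parameter tuple `(A, b, C, η, J)` of a linear/Gaussian filtering element,
with `C` and `J` symmetric positive semidefinite covariance/information
matrices. -/
structure FiltParam (d : ℕ) where
  A : Matrix (Fin d) (Fin d) ℝ
  b : Fin d → ℝ
  C : Matrix (Fin d) (Fin d) ℝ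
  η : Fin d → ℝ
  J : Matrix (Fin d) (Fin d) ℝ

/-- The parametrized linear/Gaussian filtering composition:
`A_{ij} = Aⱼ(I + Cᵢ Jⱼ)⁻¹Aᵢ`, `b_{ij} = Aⱼ(I + Cᵢ Jⱼ)⁻¹(bᵢ + Cᵢ ηⱼ) + bⱼ`,
`C_{ij} = Aⱼ(I + Cᵢ Jⱼ)⁻¹Cᵢ Aⱼᵀ + Cⱼ`,
`η_{ij} = Aᵢᵀ(I + Jⱼ Cᵢ)⁻¹(ηⱼ − Jⱼ bᵢ) + ηᵢ`,
`J_{ij} = Aᵢᵀ(I + Jⱼ Cᵢ)⁻¹Jⱼ Aᵢ + Jᵢ`. -/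
noncomputable def filtComp {d : ℕ} (p q : FiltParam d) : FiltParam d where
  A := q.A * (1 + p.C * q.J)⁻¹ * p.A
  b := q.A *ᵥ (1 + p.C * q.J)⁻¹ *ᵥ (p.b + p.C *ᵥ q.η) + q.b
  C := q.A * (1 + p.C * q.J)⁻¹ * p.C * q.Aᵀ + q.C
  η := p.Aᵀ *ᵥ (1 + q.J * p.C)⁻¹ *ᵥ (q.η - q.J *ᵥ p.b) + p.η
  J := p.Aᵀ * (1 + q.J * p.C)⁻¹ * q.J * p.A + p.J

namespace Matrix

section

variable {n : Type*}

theorem replicateCol_sub {α : Type*} [Sub α] (v w : n → α) :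
    replicateCol n (v - w) = replicateCol n v - replicateCol n w :=
  rfl

theorem replicateCol_self_injective {α : Type*} :
    Function.Injective (replicateCol n : (n → α) → Matrix n n α) :=
  fun _ _ h => funext fun i => congr_fun₂ h i i

theorem PosSemidef.isSymm {R : Type*} [Ring R] [PartialOrder R] [StarRing R] [TrivialStar R]
    {C : Matrix n n R} (hC : C.PosSemidef) : C.IsSymm :=
  isHermitian_iff_isSymm.1 hC.1

end

variable {m n R : Type*} [Fintype m] [Fintype n] [DecidableEq m] [DecidableEq n]

section CommRing

variable [CommRing R]

theorem inv_one_add_mul_mul_eq_mul_inv_one_add_mul (A : Matrix m n R) (B : Matrix n m R) :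
    (1 + A * B)⁻¹ * A = A * (1 + B * A)⁻¹ := by
  by_cases h : IsUnit (1 + A * B).det
  · have h' : IsUnit (1 + B * A).det := by rwa [← det_one_add_mul_comm]
    have hcomm : (1 + A * B) * A = A * (1 + B * A) := by
      rw [Matrix.add_mul, Matrix.mul_add, Matrix.one_mul, Matrix.mul_one, Matrix.mul_assoc]
    calc (1 + A * B)⁻¹ * A = (1 + A * B)⁻¹ * (A * (1 + B * A)) * (1 + B * A)⁻¹ := by
          rw [← Matrix.mul_assoc, mul_nonsing_inv_cancel_right _ _ h']
      _ = A * (1 + B * A)⁻¹ := by rw [← hcomm, nonsing_inv_mul_cancel_left _ _ h]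
  · have h' : ¬IsUnit (1 + B * A).det := by rwa [← det_one_add_mul_comm]
    rw [nonsing_inv_apply_not_isUnit _ h, nonsing_inv_apply_not_isUnit _ h',
      Matrix.zero_mul, Matrix.mul_zero]

theorem inv_mul_eq_mul_inv_of_mul_eq {P U X Y : Matrix n n R} (hP : IsUnit P) (hU : IsUnit U)
    (h : X * U = P * Y) : P⁻¹ * X = Y * U⁻¹ := by
  rw [isUnit_iff_isUnit_det] at hP hU
  calc P⁻¹ * X = P⁻¹ * (X * U) * U⁻¹ := by
        rw [Matrix.mul_assoc, Matrix.mul_assoc X, mul_nonsing_inv _ hU, Matrix.mul_one]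
    _ = Y * U⁻¹ := by rw [h, nonsing_inv_mul_cancel_left _ _ hP]

end CommRing

section RCLike

open scoped ComplexOrder

variable {𝕜 : Type*} [RCLike 𝕜]

open scoped MatrixOrder in
theorem PosSemidef.exists_eq_conjTranspose_mul_self {C : Matrix n n 𝕜} (hC : C.PosSemidef) :
    ∃ B : Matrix n n 𝕜, C = Bᴴ * B :=
  ⟨CFC.sqrt C, by rw [(CFC.sqrt_nonneg C).posSemidef.1, CFC.sqrt_mul_sqrt_self C hC.nonneg]⟩

theorem isUnit_one_add_mul_of_posSemidef {C J : Matrix n n 𝕜} (hC : C.PosSemidef)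
    (hJ : J.PosSemidef) : IsUnit (1 + C * J) := by
  obtain ⟨B, rfl⟩ := hC.exists_eq_conjTranspose_mul_self
  have hpos : (1 + B * J * Bᴴ).PosDef := PosDef.one.add_posSemidef (hJ.mul_mul_conjTranspose_same B)
  rw [isUnit_iff_isUnit_det, Matrix.mul_assoc, det_one_add_mul_comm]
  exact (isUnit_iff_isUnit_det _).1 hpos.isUnit

theorem PosSemidef.inv_one_add_mul_mul {C J : Matrix n n 𝕜} (hC : C.PosSemidef)
    (hJ : J.PosSemidef) : ((1 + C * J)⁻¹ * C).PosSemidef := by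
  obtain ⟨B, rfl⟩ := hC.exists_eq_conjTranspose_mul_self
  have hpos : (1 + B * J * Bᴴ).PosDef := PosDef.one.add_posSemidef (hJ.mul_mul_conjTranspose_same B)
  rw [Matrix.mul_assoc Bᴴ B J, ← Matrix.mul_assoc, inv_one_add_mul_mul_eq_mul_inv_one_add_mul]
  exact hpos.inv.posSemidef.conjTranspose_mul_mul_same B

end RCLike

end Matrix

namespace FiltParam

variable {d : ℕ}

def dual (p : FiltParam d) : FiltParam d where
  A := p.Aᵀ
  b := p.η
  C := p.J
  η := -p.b
  J := p.C

theorem ext {x y : FiltParam d} (hA : x.A = y.A) (hb : x.b = y.b) (hC : x.C = y.C)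
    (hη : x.η = y.η) (hJ : x.J = y.J) : x = y := by
  cases x; cases y; congr

end FiltParam

section

variable {d : ℕ} {p q r : FiltParam d}

theorem filtComp_dual (hpC : p.C.IsSymm) (hqJ : q.J.IsSymm) :
    (filtComp p q).dual = filtComp q.dual p.dual := by
  have h_transpose : ((1 + p.C * q.J)⁻¹)ᵀ = (1 + q.J * p.C)⁻¹ := by
    rw [transpose_nonsing_inv, transpose_add, transpose_one, transpose_mul, hpC.eq, hqJ.eq]
  apply FiltParam.ext
  · simp only [filtComp, FiltParam.dual, transpose_mul, h_transpose, Matrix.mul_assoc]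
  · simp only [filtComp, FiltParam.dual, mulVec_neg, sub_eq_add_neg]
  · simp only [filtComp, FiltParam.dual, transpose_transpose]
  · simp only [filtComp, FiltParam.dual, transpose_transpose, mulVec_neg, sub_eq_add_neg, neg_add,
      mulVec_add]
  · simp only [filtComp, FiltParam.dual, transpose_transpose]

theorem posSemidef_filtComp_C (hpC : p.C.PosSemidef) (hqC : q.C.PosSemidef)
    (hqJ : q.J.PosSemidef) : (filtComp p q).C.PosSemidef := by
  have h := (hpC.inv_one_add_mul_mul hqJ).mul_mul_conjTranspose_same q.A
  rw [conjTranspose_eq_transpose_of_trivial, ← Matrix.mul_assoc] at h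
  exact h.add hqC

theorem posSemidef_filtComp_J (hpC : p.C.PosSemidef) (hpJ : p.J.PosSemidef)
    (hqJ : q.J.PosSemidef) : (filtComp p q).J.PosSemidef := by
  have h := (hqJ.inv_one_add_mul_mul hpC).conjTranspose_mul_mul_same p.A
  rw [conjTranspose_eq_transpose_of_trivial, ← Matrix.mul_assoc] at h
  exact h.add hpJ

theorem inv_one_add_filtComp_C_mul_mul_A_mul_inv (hM : IsUnit (1 + p.C * q.J))
    (hS : IsUnit (1 + q.C * r.J)) (hP : IsUnit (1 + (filtComp p q).C * r.J))
    (hU : IsUnit (1 + p.C * (filtComp q r).J)) :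
    (1 + (filtComp p q).C * r.J)⁻¹ * (q.A * (1 + p.C * q.J)⁻¹) =
      (1 + q.C * r.J)⁻¹ * q.A * (1 + p.C * (filtComp q r).J)⁻¹ := by
  apply inv_mul_eq_mul_inv_of_mul_eq hP hU
  rw [isUnit_iff_isUnit_det] at hM hS
  calc q.A * (1 + p.C * q.J)⁻¹ * (1 + p.C * (filtComp q r).J)
      = q.A * ((1 + p.C * q.J)⁻¹ * (1 + p.C * q.J))
        + q.A * (1 + p.C * q.J)⁻¹ * p.C * q.Aᵀ * ((1 + r.J * q.C)⁻¹ * r.J) * q.A := by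
        simp only [filtComp]; noncomm_ring
    _ = (1 + q.C * r.J) * (1 + q.C * r.J)⁻¹ * q.A
        + q.A * (1 + p.C * q.J)⁻¹ * p.C * q.Aᵀ * (r.J * (1 + q.C * r.J)⁻¹) * q.A := by
        rw [nonsing_inv_mul _ hM, mul_nonsing_inv _ hS,
          inv_one_add_mul_mul_eq_mul_inv_one_add_mul, Matrix.mul_one, Matrix.one_mul]
    _ = (1 + (filtComp p q).C * r.J) * ((1 + q.C * r.J)⁻¹ * q.A) := by
        simp only [filtComp]; noncomm_ring

theorem inv_one_add_filtComp_C_mul (hM : IsUnit (1 + p.C * q.J))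
    (hS : IsUnit (1 + q.C * r.J)) (hP : IsUnit (1 + (filtComp p q).C * r.J))
    (hU : IsUnit (1 + p.C * (filtComp q r).J)) :
    (1 + (filtComp p q).C * r.J)⁻¹ = (1 + q.C * r.J)⁻¹ -
      (1 + q.C * r.J)⁻¹ * q.A * (1 + p.C * (filtComp q r).J)⁻¹ *
        (p.C * q.Aᵀ * ((1 + r.J * q.C)⁻¹ * r.J)) := by
  have key := inv_one_add_filtComp_C_mul_mul_A_mul_inv hM hS hP hU
  rw [isUnit_iff_isUnit_det] at hS hP
  calc (1 + (filtComp p q).C * r.J)⁻¹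
      = (1 + (filtComp p q).C * r.J)⁻¹ * ((1 + q.C * r.J) * (1 + q.C * r.J)⁻¹) := by
        rw [mul_nonsing_inv _ hS, Matrix.mul_one]
    _ = (1 + (filtComp p q).C * r.J)⁻¹ * (1 + (filtComp p q).C * r.J) * (1 + q.C * r.J)⁻¹ -
          (1 + (filtComp p q).C * r.J)⁻¹ * (q.A * (1 + p.C * q.J)⁻¹) *
            (p.C * q.Aᵀ * (r.J * (1 + q.C * r.J)⁻¹)) := by
        simp only [filtComp]; noncomm_ring
    _ = _ := by
        rw [nonsing_inv_mul _ hP, key, inv_one_add_mul_mul_eq_mul_inv_one_add_mul, Matrix.one_mul]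

theorem inv_one_add_filtComp_C_mul_mul_filtComp_C (hM : IsUnit (1 + p.C * q.J))
    (hS : IsUnit (1 + q.C * r.J)) (hP : IsUnit (1 + (filtComp p q).C * r.J))
    (hU : IsUnit (1 + p.C * (filtComp q r).J)) :
    (1 + (filtComp p q).C * r.J)⁻¹ * (filtComp p q).C =
      (1 + q.C * r.J)⁻¹ * q.A * (1 + p.C * (filtComp q r).J)⁻¹ * p.C * q.Aᵀ *
        (1 + r.J * q.C)⁻¹ + (1 + q.C * r.J)⁻¹ * q.C := by
  have hT : IsUnit (1 + r.J * q.C).det := by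
    rw [det_one_add_mul_comm, ← isUnit_iff_isUnit_det]; exact hS
  have hTinv : 1 - (1 + r.J * q.C)⁻¹ * r.J * q.C = (1 + r.J * q.C)⁻¹ := by
    calc 1 - (1 + r.J * q.C)⁻¹ * r.J * q.C
        = (1 + r.J * q.C)⁻¹ * (1 + r.J * q.C) - (1 + r.J * q.C)⁻¹ * r.J * q.C := by
          rw [nonsing_inv_mul _ hT]
      _ = (1 + r.J * q.C)⁻¹ := by noncomm_ring
  calc (1 + (filtComp p q).C * r.J)⁻¹ * (filtComp p q).C
      = (1 + (filtComp p q).C * r.J)⁻¹ * (q.A * (1 + p.C * q.J)⁻¹) * (p.C * q.Aᵀ) +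
          (1 + (filtComp p q).C * r.J)⁻¹ * q.C := by
        simp only [filtComp]; noncomm_ring
    _ = (1 + q.C * r.J)⁻¹ * q.A * (1 + p.C * (filtComp q r).J)⁻¹ * p.C * q.Aᵀ *
          (1 - (1 + r.J * q.C)⁻¹ * r.J * q.C) + (1 + q.C * r.J)⁻¹ * q.C := by
        rw [inv_one_add_filtComp_C_mul_mul_A_mul_inv hM hS hP hU,
          inv_one_add_filtComp_C_mul hM hS hP hU]
        noncomm_ring
    _ = _ := by rw [hTinv]

theorem filtComp_assoc_A (hM : IsUnit (1 + p.C * q.J))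
    (hS : IsUnit (1 + q.C * r.J)) (hP : IsUnit (1 + (filtComp p q).C * r.J))
    (hU : IsUnit (1 + p.C * (filtComp q r).J)) :
    (filtComp (filtComp p q) r).A = (filtComp p (filtComp q r)).A := by
  calc (filtComp (filtComp p q) r).A
      = r.A * ((1 + (filtComp p q).C * r.J)⁻¹ * (q.A * (1 + p.C * q.J)⁻¹)) * p.A := by
        simp only [filtComp, Matrix.mul_assoc]
    _ = (filtComp p (filtComp q r)).A := by
        rw [inv_one_add_filtComp_C_mul_mul_A_mul_inv hM hS hP hU]
        simp only [filtComp, Matrix.mul_assoc]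

theorem filtComp_assoc_b (hM : IsUnit (1 + p.C * q.J))
    (hS : IsUnit (1 + q.C * r.J)) (hP : IsUnit (1 + (filtComp p q).C * r.J))
    (hU : IsUnit (1 + p.C * (filtComp q r).J)) :
    (filtComp (filtComp p q) r).b = (filtComp p (filtComp q r)).b := by
  -- turn vectors into square matrices, so that the computation happens in a ring
  apply replicateCol_self_injective
  calc replicateCol (Fin d) (filtComp (filtComp p q) r).b
      = r.A * ((1 + (filtComp p q).C * r.J)⁻¹ * (q.A * (1 + p.C * q.J)⁻¹)) *
            (replicateCol _ p.b + p.C * replicateCol _ q.η) +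
          r.A * (1 + (filtComp p q).C * r.J)⁻¹ * replicateCol _ q.b +
          r.A * ((1 + (filtComp p q).C * r.J)⁻¹ * (filtComp p q).C) * replicateCol _ r.η +
          replicateCol _ r.b := by
        simp only [filtComp, replicateCol_add, replicateCol_mulVec]; noncomm_ring
    _ = r.A * ((1 + q.C * r.J)⁻¹ * q.A * (1 + p.C * (filtComp q r).J)⁻¹) *
            (replicateCol _ p.b + p.C * replicateCol _ q.η) +
          r.A * ((1 + q.C * r.J)⁻¹ - (1 + q.C * r.J)⁻¹ * q.A * (1 + p.C * (filtComp q r).J)⁻¹ *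
            (p.C * q.Aᵀ * ((1 + r.J * q.C)⁻¹ * r.J))) * replicateCol _ q.b +
          r.A * ((1 + q.C * r.J)⁻¹ * q.A * (1 + p.C * (filtComp q r).J)⁻¹ * p.C * q.Aᵀ *
            (1 + r.J * q.C)⁻¹ + (1 + q.C * r.J)⁻¹ * q.C) * replicateCol _ r.η +
          replicateCol _ r.b := by
        rw [inv_one_add_filtComp_C_mul_mul_A_mul_inv hM hS hP hU,
          inv_one_add_filtComp_C_mul_mul_filtComp_C hM hS hP hU,
          inv_one_add_filtComp_C_mul hM hS hP hU]
    _ = replicateCol (Fin d) (filtComp p (filtComp q r)).b := by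
        simp only [filtComp, replicateCol_add, replicateCol_sub, replicateCol_mulVec]; noncomm_ring

theorem filtComp_assoc_C (hM : IsUnit (1 + p.C * q.J))
    (hS : IsUnit (1 + q.C * r.J)) (hP : IsUnit (1 + (filtComp p q).C * r.J))
    (hU : IsUnit (1 + p.C * (filtComp q r).J)) (hqC : q.C.IsSymm) (hrJ : r.J.IsSymm) :
    (filtComp (filtComp p q) r).C = (filtComp p (filtComp q r)).C := by
  have hS_transpose : ((1 + q.C * r.J)⁻¹)ᵀ = (1 + r.J * q.C)⁻¹ := by
    rw [transpose_nonsing_inv, transpose_add, transpose_one, transpose_mul, hqC.eq, hrJ.eq]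
  calc (filtComp (filtComp p q) r).C
      = r.A * ((1 + (filtComp p q).C * r.J)⁻¹ * (filtComp p q).C) * r.Aᵀ + r.C := by
        simp only [filtComp]; noncomm_ring
    _ = r.A * ((1 + q.C * r.J)⁻¹ * q.A * (1 + p.C * (filtComp q r).J)⁻¹ * p.C * q.Aᵀ *
          (1 + r.J * q.C)⁻¹ + (1 + q.C * r.J)⁻¹ * q.C) * r.Aᵀ + r.C := by
        rw [inv_one_add_filtComp_C_mul_mul_filtComp_C hM hS hP hU]
    _ = (filtComp p (filtComp q r)).C := by
        simp only [filtComp, transpose_mul, hS_transpose]; noncomm_ring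

theorem filtComp_assoc_A_b_C (hpC : p.C.PosSemidef)
    (hqC : q.C.PosSemidef) (hqJ : q.J.PosSemidef) (hrJ : r.J.PosSemidef) :
    (filtComp (filtComp p q) r).A = (filtComp p (filtComp q r)).A ∧
      (filtComp (filtComp p q) r).b = (filtComp p (filtComp q r)).b ∧
      (filtComp (filtComp p q) r).C = (filtComp p (filtComp q r)).C := by
  have hM := isUnit_one_add_mul_of_posSemidef hpC hqJ
  have hS := isUnit_one_add_mul_of_posSemidef hqC hrJ
  have hP := isUnit_one_add_mul_of_posSemidef (posSemidef_filtComp_C hpC hqC hqJ) hrJ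
  have hU := isUnit_one_add_mul_of_posSemidef hpC (posSemidef_filtComp_J hqC hqJ hrJ)
  exact ⟨filtComp_assoc_A hM hS hP hU, filtComp_assoc_b hM hS hP hU,
    filtComp_assoc_C hM hS hP hU hqC.isSymm hrJ.isSymm⟩

end

theorem filtComp_assoc_general {d : ℕ} (p q r : FiltParam d)
    (hpC : p.C.PosSemidef)
    (hqC : q.C.PosSemidef) (hqJ : q.J.PosSemidef)
    (hrJ : r.J.PosSemidef) :
    filtComp (filtComp p q) r = filtComp p (filtComp q r) := by
  obtain ⟨hA, hb, hC⟩ := filtComp_assoc_A_b_C hpC hqC hqJ hrJ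
  obtain ⟨-, hη, hJ⟩ :=
    filtComp_assoc_A_b_C (p := r.dual) (q := q.dual) (r := p.dual) hrJ hqJ hqC hpC
  have hpq := filtComp_dual hpC.isSymm hqJ.isSymm
  have hqr := filtComp_dual hqC.isSymm hrJ.isSymm
  have hpq_r := filtComp_dual (posSemidef_filtComp_C hpC hqC hqJ).isSymm hrJ.isSymm
  have hp_qr := filtComp_dual hpC.isSymm (posSemidef_filtComp_J hqC hqJ hrJ).isSymm
  rw [← hpq, ← hqr, ← hpq_r, ← hp_qr] at hη hJ
  exact FiltParam.ext hA hb hC hη.symm hJ.symm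

/-- **Associativity of the parametrized linear/Gaussian filtering composition**
on tuples with `C ⪰ 0` and `J ⪰ 0` (so that all matrices `I + C J'` appearing
are invertible). -/
theorem filtComp_assoc {d : ℕ} (p q r : FiltParam d)
    (hpC : p.C.PosSemidef) (hpJ : p.J.PosSemidef)
    (hqC : q.C.PosSemidef) (hqJ : q.J.PosSemidef)
    (hrC : r.C.PosSemidef) (hrJ : r.J.PosSemidef) :
    filtComp (filtComp p q) r = filtComp p (filtComp q r) :=
  filtComp_assoc_general p q r hpC hqC hqJ hrJ
end

section
/- The Blelloch parallel scan algorithm (up-sweep followed by down-sweep and a final combining pass) applied to a sequence (a_1, …, a_n) with n = 2^m and an associative binary operator ⊗ correctly computes the all-prefix-sums sequence (a_1, a_1⊗a_2, …, a_1⊗⋯⊗a_n). -/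
/-- The operation `⊗` lifted to `Option α`, with `none` an adjoined identity
(used to handle the exclusive-scan intermediate of the Blelloch algorithm). -/
def liftOp {α : Type*} (op : α → α → α) : Option α → Option α → Option α
  | none, y => y
  | some x, none => some x
  | some x, some y => some (op x y)

/-- One level `d` of the up-sweep: in every block of size `2^(d+1)` of the
(0-indexed) array, the last position `k` receives `a[j] ⊗ a[k]` where `j` is
the last position of the left half-block. -/
def upStep {α : Type*} (op : α → α → α) (d : ℕ) (f : ℕ → Option α) : ℕ → Option α :=
  fun t =>
    if (t + 1) % 2 ^ (d + 1) = 0 then liftOp op (f (t - 2 ^ d)) (f t) else f t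

/-- The up-sweep phase: levels `d = 0, …, m-1` applied in order. -/
def upSweep {α : Type*} (op : α → α → α) : ℕ → (ℕ → Option α) → ℕ → Option α
  | 0, f => f
  | d + 1, f => upStep op d (upSweep op d f)

/-- One level `d` of the down-sweep: within each block of size `2^(d+1)` with
half-block ends `j` and `k`, simultaneously `a[j] ← a[k]` and
`a[k] ← a[k] ⊗ (old a[j])`. -/
def downStep {α : Type*} (op : α → α → α) (d : ℕ) (f : ℕ → Option α) : ℕ → Option α :=
  fun t =>
    if (t + 1) % 2 ^ (d + 1) = 0 then liftOp op (f t) (f (t - 2 ^ d))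
    else if (t + 1) % 2 ^ (d + 1) = 2 ^ d then f (t + 2 ^ d)
    else f t

/-- The down-sweep phase: levels `d = m-1, …, 0` applied in order. -/
def downSweep {α : Type*} (op : α → α → α) : ℕ → (ℕ → Option α) → ℕ → Option α
  | 0, f => f
  | d + 1, f => downSweep op d (downStep op d f)

/-- The full Blelloch parallel scan on an input sequence `a` of length `2^m`:
up-sweep, clearing of the root (position `2^m - 1`) to the adjoined identity,
down-sweep (producing the exclusive scan), and a final pass combining with the
saved input `a`. -/
def blellochScan {α : Type*} [DecidableEq ℕ] (op : α → α → α) (m : ℕ) (a : ℕ → α) :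
    ℕ → Option α :=
  fun i =>
    liftOp op
      (downSweep op m
        (Function.update (upSweep op m (fun t => some (a t))) (2 ^ m - 1) none) i)
      (some (a i))

/-- The all-prefix-sums: `inclusivePrefix op a i = some (a_0 ⊗ a_1 ⊗ ⋯ ⊗ a_i)`. -/
def inclusivePrefix {α : Type*} (op : α → α → α) (a : ℕ → α) (i : ℕ) : Option α :=
  ((List.range (i + 1)).map (fun j => some (a j))).foldl (liftOp op) none

/-!
Write `t + 1` for the 1-based index of position `t`. After `d` levels of the up-sweep, position
`t` holds the product of the block of length `gcd (2^d) (t + 1)` ending at `t`. The down-sweep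
maintains the invariant that, with `d` levels still to go, every position `t` with
`2^d ∣ t + 1` holds the exclusive prefix, the product of the first `t + 1 - 2^d` entries, while
all other positions still hold their up-sweep values; clearing the root establishes it for
`d = m`. At `d = 0` this is the exclusive scan, and the final pass turns it into the inclusive one.
-/

lemma Nat.gcd_two_pow_succ_of_not_dvd {d n : ℕ} (h : ¬ 2 ^ (d + 1) ∣ n) :
    Nat.gcd (2 ^ (d + 1)) n = Nat.gcd (2 ^ d) n := by
  obtain ⟨j, hj_le, hj⟩ :=
    (Nat.dvd_prime_pow Nat.prime_two).1 (Nat.gcd_dvd_left (2 ^ (d + 1)) n)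
  have hjd : j ≤ d := by
    by_contra hjd
    exact h (by rw [show j = d + 1 by omega] at hj; exact hj ▸ Nat.gcd_dvd_right _ _)
  apply Nat.dvd_antisymm
  · exact Nat.dvd_gcd (hj ▸ pow_dvd_pow 2 hjd) (Nat.gcd_dvd_right _ _)
  · exact Nat.gcd_dvd_gcd_of_dvd_left _ (pow_dvd_pow 2 d.le_succ)

lemma Nat.gcd_two_pow_of_dvd_of_not_dvd {d m n : ℕ} (hdm : d ≤ m) (h₁ : 2 ^ d ∣ n)
    (h₂ : ¬ 2 ^ (d + 1) ∣ n) : Nat.gcd (2 ^ m) n = 2 ^ d := by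
  obtain ⟨j, -, hj⟩ := (Nat.dvd_prime_pow Nat.prime_two).1 (Nat.gcd_dvd_left (2 ^ m) n)
  have hdj : d ≤ j :=
    (Nat.pow_dvd_pow_iff_le_right one_lt_two).1 (hj ▸ Nat.dvd_gcd (pow_dvd_pow 2 hdm) h₁)
  have hjd : j ≤ d := by
    by_contra hjd
    exact h₂ ((pow_dvd_pow 2 (by omega)).trans (hj ▸ Nat.gcd_dvd_right _ _))
  rw [hj, le_antisymm hjd hdj]

lemma Nat.two_pow_dvd_iff_mod_two_pow_succ (d n : ℕ) :
    2 ^ d ∣ n ↔ n % 2 ^ (d + 1) = 0 ∨ n % 2 ^ (d + 1) = 2 ^ d := by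
  rw [← Nat.dvd_mod_iff (pow_dvd_pow 2 d.le_succ)]
  have hlt : n % 2 ^ (d + 1) < 2 ^ d * 2 := pow_succ 2 d ▸ Nat.mod_lt _ (by positivity)
  constructor
  · rintro ⟨s, hs⟩
    rw [hs] at hlt ⊢
    have : s < 2 := Nat.lt_of_mul_lt_mul_left hlt
    interval_cases s <;> simp
  · rintro (h | h) <;> simp [h]

section Scan

variable {α : Type*} (op : α → α → α) (a : ℕ → α)

lemma liftOp_none_right (x : Option α) : liftOp op x none = x := by
  cases x <;> rfl

lemma liftOp_assoc (hassoc : ∀ x y z, op (op x y) z = op x (op y z)) (x y z : Option α) :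
    liftOp op (liftOp op x y) z = liftOp op x (liftOp op y z) := by
  cases x <;> cases y <;> cases z <;> simp [liftOp, hassoc]

def segFold (s : ℕ) : ℕ → Option α
  | 0 => none
  | l + 1 => liftOp op (segFold s l) (some (a (s + l)))

lemma segFold_add (hassoc : ∀ x y z, op (op x y) z = op x (op y z)) (s l₁ l₂ : ℕ) :
    segFold op a s (l₁ + l₂) = liftOp op (segFold op a s l₁) (segFold op a (s + l₁) l₂) := by
  induction l₂ with
  | zero => simp [segFold, liftOp_none_right]
  | succ l ih => rw [← add_assoc, segFold, ih, segFold, liftOp_assoc op hassoc, add_assoc]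

lemma inclusivePrefix_eq_segFold (i : ℕ) : inclusivePrefix op a i = segFold op a 0 (i + 1) := by
  unfold inclusivePrefix
  induction i + 1 with
  | zero => rfl
  | succ n ih => simp [List.range_succ, ih, segFold]

lemma upSweep_apply (hassoc : ∀ x y z, op (op x y) z = op x (op y z)) (d t : ℕ) :
    upSweep op d (fun t => some (a t)) t =
      segFold op a (t + 1 - Nat.gcd (2 ^ d) (t + 1)) (Nat.gcd (2 ^ d) (t + 1)) := by
  induction d generalizing t with
  | zero => simp [upSweep, segFold, liftOp]
  | succ d ih =>
    rw [upSweep, upStep]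
    split_ifs with h
    · have hdvd : 2 ^ (d + 1) ∣ t + 1 := Nat.dvd_of_mod_eq_zero h
      have hle : 2 ^ (d + 1) ≤ t + 1 := Nat.le_of_dvd t.succ_pos hdvd
      have hp : 2 ^ (d + 1) = 2 ^ d + 2 ^ d := by rw [pow_succ, mul_two]
      have hdvd' : 2 ^ d ∣ t + 1 := (pow_dvd_pow 2 d.le_succ).trans hdvd
      have hsub : t - 2 ^ d + 1 = t + 1 - 2 ^ d := by omega
      rw [ih, ih, hsub, Nat.gcd_eq_left hdvd, Nat.gcd_eq_left hdvd',
        Nat.gcd_eq_left (Nat.dvd_sub hdvd' dvd_rfl), hp, segFold_add op a hassoc]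
      congr 2 <;> omega
    · rw [ih, Nat.gcd_two_pow_succ_of_not_dvd (mt Nat.mod_eq_zero_of_dvd h)]

lemma upSweep_apply_of_dvd_of_not_dvd (hassoc : ∀ x y z, op (op x y) z = op x (op y z))
    {d m t : ℕ} (hdm : d ≤ m) (h₁ : 2 ^ d ∣ t + 1) (h₂ : ¬ 2 ^ (d + 1) ∣ t + 1) :
    upSweep op m (fun t => some (a t)) t = segFold op a (t + 1 - 2 ^ d) (2 ^ d) := by
  rw [upSweep_apply op a hassoc, Nat.gcd_two_pow_of_dvd_of_not_dvd hdm h₁ h₂]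

/-- The state of the down-sweep when the levels `d - 1, …, 0` remain to be applied. -/
def IsDownSweepState (m d : ℕ) (g : ℕ → Option α) : Prop :=
  ∀ t < 2 ^ m, g t =
    if 2 ^ d ∣ t + 1 then segFold op a 0 (t + 1 - 2 ^ d) else upSweep op m (fun t => some (a t)) t

lemma isDownSweepState_update_root (m : ℕ) :
    IsDownSweepState op a m m
      (Function.update (upSweep op m (fun t => some (a t))) (2 ^ m - 1) none) := by
  intro t ht
  have hpos : 0 < 2 ^ m := by positivity
  by_cases hroot : t = 2 ^ m - 1
  · subst hroot
    rw [Function.update_self, if_pos (by rw [Nat.sub_add_cancel hpos]), Nat.sub_add_cancel hpos,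
      Nat.sub_self, segFold]
  · have hnd : ¬ 2 ^ m ∣ t + 1 := fun h => hroot (by have := Nat.le_of_dvd t.succ_pos h; omega)
    rw [Function.update_of_ne hroot, if_neg hnd]

lemma IsDownSweepState.step (hassoc : ∀ x y z, op (op x y) z = op x (op y z))
    {m d : ℕ} {g : ℕ → Option α} (hdm : d < m) (hg : IsDownSweepState op a m (d + 1) g) :
    IsDownSweepState op a m d (downStep op d g) := by
  intro t ht
  have hp : 2 ^ (d + 1) = 2 ^ d + 2 ^ d := by rw [pow_succ, mul_two]
  have hdvd_iff := Nat.two_pow_dvd_iff_mod_two_pow_succ d (t + 1)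
  rw [_root_.downStep]
  by_cases h₀ : (t + 1) % 2 ^ (d + 1) = 0
  · have hdvd : 2 ^ (d + 1) ∣ t + 1 := Nat.dvd_of_mod_eq_zero h₀
    have hle : 2 ^ (d + 1) ≤ t + 1 := Nat.le_of_dvd t.succ_pos hdvd
    have hsub : t - 2 ^ d + 1 = t + 1 - 2 ^ d := by omega
    -- the left sibling `t - 2^d` is untouched by the levels above `d`
    have hleft : ¬ 2 ^ (d + 1) ∣ t - 2 ^ d + 1 := by
      rw [hsub, Nat.dvd_sub_iff_right (by omega) hdvd,
        Nat.pow_dvd_pow_iff_le_right one_lt_two]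
      omega
    have hleft' : 2 ^ d ∣ t - 2 ^ d + 1 := by
      rw [hsub]; exact Nat.dvd_sub ((pow_dvd_pow 2 d.le_succ).trans hdvd) dvd_rfl
    rw [if_pos h₀, if_pos (hdvd_iff.2 (Or.inl h₀)), hg t ht, if_pos hdvd, hg _ (by omega),
      if_neg hleft, upSweep_apply_of_dvd_of_not_dvd op a hassoc hdm.le hleft' hleft,
      show t + 1 - 2 ^ d = t + 1 - 2 ^ (d + 1) + 2 ^ d by omega, segFold_add op a hassoc]
    congr 2; omega
  by_cases h₁ : (t + 1) % 2 ^ (d + 1) = 2 ^ d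
  · have hdvd : 2 ^ (d + 1) ∣ t + 2 ^ d + 1 := by
      have := Nat.div_add_mod (t + 1) (2 ^ (d + 1))
      rw [show t + 2 ^ d + 1 = 2 ^ (d + 1) * ((t + 1) / 2 ^ (d + 1)) + 2 ^ (d + 1) by omega]
      exact dvd_add (dvd_mul_right _ _) dvd_rfl
    have hlt : t + 2 ^ d < 2 ^ m := Nat.lt_of_succ_le <|
      Nat.le_of_lt_add_of_dvd (by omega) hdvd (pow_dvd_pow 2 hdm)
    rw [if_neg h₀, if_pos h₁, if_pos (hdvd_iff.2 (Or.inr h₁)), hg _ hlt, if_pos hdvd]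
    congr 1; omega
  · rw [if_neg h₀, if_neg h₁, hg t ht, if_neg (mt Nat.mod_eq_zero_of_dvd h₀),
      if_neg (by rw [hdvd_iff]; tauto)]

lemma IsDownSweepState.downSweep_apply (hassoc : ∀ x y z, op (op x y) z = op x (op y z))
    {m d : ℕ} {g : ℕ → Option α} (hdm : d ≤ m) (hg : IsDownSweepState op a m d g)
    {t : ℕ} (ht : t < 2 ^ m) : downSweep op d g t = segFold op a 0 t := by
  induction d generalizing g with
  | zero => simpa [downSweep] using hg t ht
  | succ d ih => exact ih (by omega) (hg.step op a hassoc (by omega))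

end Scan

/-- **Correctness of the Blelloch parallel scan:** for an associative operator
`⊗` and an input sequence of length `n = 2^m`, the up-sweep followed by the
down-sweep and a final combining pass computes the all-prefix-sums
`(a_1, a_1 ⊗ a_2, …, a_1 ⊗ ⋯ ⊗ a_n)`. -/
theorem blellochScan_correct {α : Type*} (op : α → α → α)
    (hassoc : ∀ x y z, op (op x y) z = op x (op y z))
    (m : ℕ) (a : ℕ → α) :
    ∀ i < 2 ^ m, blellochScan op m a i = inclusivePrefix op a i := by
  intro i hi
  rw [blellochScan, inclusivePrefix_eq_segFold,
    (isDownSweepState_update_root op a m).downSweep_apply op a hassoc le_rfl hi, segFold, zero_add]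
end
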